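/- Let a < b, let f : [a, b] → ℝ be continuous and strictly increasing, and fix n ≥ 1. With x_l^{(n)} = a + l(b−a)/n, y_l^{(n)} = f(x_l^{(n)}), Δy_l^{(n)} = y_l^{(n)} − y_{l−1}^{(n)} (l ≥ 1), Δy_0^{(n)} = y_1^{(n)} − y_0^{(n)}, hat functions A_l^{(n)}, φ_l^{(n)}(x) = A_l^{(n)}(x)·Δy_l^{(n)} / Σ_{j=0}^{n} A_j^{(n)}(x)·Δy_j^{(n)}, and f_n(x) = Σ_{l=0}^{n} φ_l^{(n)}(x)·y_l^{(n)}: for every i ∈ {1, …, n} and every x ∈ [x_{i−1}^{(n)}, x_i^{(n)}], one has min_{t ∈ [x_{i−1}^{(n)}, x_i^{(n)}]} f(t) ≤ f_n(x) ≤ max_{t ∈ [x_{i−1}^{(n)}, x_i^{(n)}]} f(t), and consequently |f(x) − f_n(x)| ≤ max_{t ∈ [x_{i−1}^{(n)}, x_i^{(n)}]} f(t) − min_{t ∈ [x_{i−1}^{(n)}, x_i^{(n)}]} f(t). -/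

import Mathlib

/-- The equidistant node `x_l^{(n)} = a + l (b-a)/n` of `[a, b]`. -/
noncomputable def nodes (a b : ℝ) (n l : ℕ) : ℝ := a + (l : ℝ) * (b - a) / (n : ℝ)

/-- The triangular hat function `A_l^{(n)}(x) = max (0, 1 - (n/(b-a)) |x - x_l^{(n)}|)`. -/
noncomputable def hatA (a b : ℝ) (n l : ℕ) (x : ℝ) : ℝ :=
  max 0 (1 - ((n : ℝ) / (b - a)) * |x - nodes a b n l|)

/-- The increment `Δy_l^{(n)} = y_l^{(n)} − y_{l−1}^{(n)}` (`l ≥ 1`), with the convention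
`Δy_0^{(n)} = Δy_1^{(n)} = y_1^{(n)} − y_0^{(n)}`, where `y_l^{(n)} = f (x_l^{(n)})`. -/
noncomputable def dy (a b : ℝ) (f : ℝ → ℝ) (n l : ℕ) : ℝ :=
  if l = 0 then f (nodes a b n 1) - f (nodes a b n 0)
  else f (nodes a b n l) - f (nodes a b n (l - 1))

/-- The base function `φ_l^{(n)}(x) = A_l^{(n)}(x) Δy_l^{(n)} / Σ_j A_j^{(n)}(x) Δy_j^{(n)}`. -/
noncomputable def phi (a b : ℝ) (f : ℝ → ℝ) (n l : ℕ) (x : ℝ) : ℝ :=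
  hatA a b n l x * dy a b f n l /
    ∑ j ∈ Finset.range (n + 1), hatA a b n j x * dy a b f n j

/-- The interpolation function `f_n(x) = Σ_l φ_l^{(n)}(x) y_l^{(n)}`. -/
noncomputable def interp (a b : ℝ) (f : ℝ → ℝ) (n : ℕ) (x : ℝ) : ℝ :=
  ∑ l ∈ Finset.range (n + 1), phi a b f n l x * f (nodes a b n l)

/-!
On `[x_k, x_{k+1}]` only the hat functions of the two endpoints are positive, so `f_n(x)` is the
mean of `y_k` and `y_{k+1}` with the nonnegative weights `A_l(x) Δy_l` (the increments are positive
since `f` is increasing). Hence `f_n(x)` lies in `[y_k, y_{k+1}]`, which for monotone `f` is the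
range of `f` on the subinterval and also contains `f x`.
-/

open Set

lemma weighted_mean_mem_Icc {ι : Type*} {s : Finset ι} {w y : ι → ℝ} {m M : ℝ}
    (hw : ∀ i ∈ s, 0 ≤ w i) (hsum : 0 < ∑ i ∈ s, w i)
    (hy : ∀ i ∈ s, w i ≠ 0 → y i ∈ Icc m M) :
    (∑ i ∈ s, w i * y i) / ∑ i ∈ s, w i ∈ Icc m M := by
  rw [mem_Icc, le_div_iff₀ hsum, div_le_iff₀ hsum, Finset.mul_sum, Finset.mul_sum]
  constructor <;> refine Finset.sum_le_sum fun i hi => ?_ <;> by_cases hwi : w i = 0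
  · simp [hwi]
  · rw [mul_comm]; exact mul_le_mul_of_nonneg_left (hy i hi hwi).1 (hw i hi)
  · simp [hwi]
  · rw [mul_comm M]; exact mul_le_mul_of_nonneg_left (hy i hi hwi).2 (hw i hi)

section Nodes

variable {a b : ℝ} {n : ℕ}

lemma nodes_eq_add_mul (a b : ℝ) (n l : ℕ) : nodes a b n l = a + l * ((b - a) / n) := by
  rw [nodes, mul_div_assoc]

lemma nodes_succ (a b : ℝ) (n l : ℕ) : nodes a b n (l + 1) = nodes a b n l + (b - a) / n := by
  rw [nodes_eq_add_mul, nodes_eq_add_mul]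
  push_cast
  ring

lemma nodes_strictMono (hab : a < b) (hn : 0 < n) : StrictMono (nodes a b n) := by
  intro l m hlm
  have hstep : 0 < (b - a) / n := div_pos (sub_pos.2 hab) (Nat.cast_pos.2 hn)
  rw [nodes_eq_add_mul, nodes_eq_add_mul]
  gcongr

lemma nodes_mem_Icc (hab : a ≤ b) {l : ℕ} (hl : l ≤ n) : nodes a b n l ∈ Icc a b := by
  have hba : 0 ≤ b - a := sub_nonneg.2 hab
  have hfrac : l * (b - a) / n ≤ b - a :=
    div_le_of_le_mul₀ n.cast_nonneg hba (by rw [mul_comm]; gcongr)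
  have : 0 ≤ l * (b - a) / n := div_nonneg (mul_nonneg l.cast_nonneg hba) n.cast_nonneg
  constructor <;> simp only [nodes] <;> linarith

end Nodes

section Hat

variable {a b : ℝ} {n : ℕ}

lemma hatA_nonneg (a b : ℝ) (n l : ℕ) (x : ℝ) : 0 ≤ hatA a b n l x := le_max_left _ _

lemma hatA_pos_iff (hab : a < b) (hn : 0 < n) {l : ℕ} {x : ℝ} :
    0 < hatA a b n l x ↔ |x - nodes a b n l| < (b - a) / n := by
  rw [hatA, lt_max_iff, lt_self_iff_false, false_or, sub_pos, div_mul_eq_mul_div,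
    div_lt_one (sub_pos.2 hab), lt_div_iff₀ (Nat.cast_pos.2 hn), mul_comm]

lemma hatA_pos_or_hatA_succ_pos (hab : a < b) (hn : 0 < n) {k : ℕ} {x : ℝ}
    (hx : x ∈ Icc (nodes a b n k) (nodes a b n (k + 1))) :
    0 < hatA a b n k x ∨ 0 < hatA a b n (k + 1) x := by
  rw [hatA_pos_iff hab hn, hatA_pos_iff hab hn]
  rcases hx.2.lt_or_eq with hlt | rfl
  · left
    rw [abs_of_nonneg (sub_nonneg.2 hx.1)]
    rw [nodes_succ] at hlt
    linarith
  · right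
    rw [sub_self, abs_zero]
    exact div_pos (sub_pos.2 hab) (Nat.cast_pos.2 hn)

lemma eq_or_eq_succ_of_hatA_pos (hab : a < b) (hn : 0 < n) {j k : ℕ} {x : ℝ}
    (hx : x ∈ Icc (nodes a b n k) (nodes a b n (k + 1))) (hj : 0 < hatA a b n j x) :
    j = k ∨ j = k + 1 := by
  set h := (b - a) / n with h_def
  have hh : 0 < h := div_pos (sub_pos.2 hab) (Nat.cast_pos.2 hn)
  rw [hatA_pos_iff hab hn, abs_lt] at hj
  obtain ⟨hx₁, hx₂⟩ := hx
  rw [nodes_eq_add_mul] at hx₁ hx₂ hj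
  push_cast at hx₂
  have hkj : (k : ℝ) < j + 1 := lt_of_mul_lt_mul_right (by linarith) hh.le
  have hjk : (j : ℝ) < k + 2 := lt_of_mul_lt_mul_right (by linarith) hh.le
  norm_cast at hkj hjk
  omega

end Hat

section Interp

variable {a b : ℝ} {f : ℝ → ℝ} {n : ℕ}

lemma interp_eq_div (a b : ℝ) (f : ℝ → ℝ) (n : ℕ) (x : ℝ) :
    interp a b f n x =
      (∑ l ∈ Finset.range (n + 1), hatA a b n l x * dy a b f n l * f (nodes a b n l)) /
        ∑ l ∈ Finset.range (n + 1), hatA a b n l x * dy a b f n l := by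
  simp only [interp, phi, Finset.sum_div, div_mul_eq_mul_div]

lemma dy_pos (hab : a < b) (hmono : StrictMonoOn f (Icc a b)) (hn : 0 < n) {l : ℕ}
    (hl : l ≤ n) : 0 < dy a b f n l := by
  have hmem : ∀ m ≤ n, nodes a b n m ∈ Icc a b := fun m hm => nodes_mem_Icc hab.le hm
  have hstep : ∀ m < n, f (nodes a b n m) < f (nodes a b n (m + 1)) := fun m hm =>
    hmono (hmem m hm.le) (hmem (m + 1) hm) (nodes_strictMono hab hn (Nat.lt_succ_self m))
  unfold dy
  split_ifs with hl0
  · exact sub_pos.2 (hstep 0 hn)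
  · obtain ⟨m, rfl⟩ := Nat.exists_eq_succ_of_ne_zero hl0
    exact sub_pos.2 (hstep m hl)

theorem interp_mem_Icc (hab : a < b) (hmono : StrictMonoOn f (Icc a b)) {k : ℕ}
    (hk : k + 1 ≤ n) {x : ℝ} (hx : x ∈ Icc (nodes a b n k) (nodes a b n (k + 1))) :
    interp a b f n x ∈ Icc (f (nodes a b n k)) (f (nodes a b n (k + 1))) := by
  have hn : 0 < n := by omega
  have hweight : ∀ l ∈ Finset.range (n + 1), 0 ≤ hatA a b n l x * dy a b f n l := fun l hl =>
    mul_nonneg (hatA_nonneg a b n l x)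
      (dy_pos hab hmono hn (Nat.lt_succ_iff.1 (Finset.mem_range.1 hl))).le
  have hkk : f (nodes a b n k) ≤ f (nodes a b n (k + 1)) :=
    hmono.monotoneOn (nodes_mem_Icc hab.le (by omega)) (nodes_mem_Icc hab.le hk)
      (nodes_strictMono hab hn (Nat.lt_succ_self k)).le
  rw [interp_eq_div]
  refine weighted_mean_mem_Icc hweight ?_ fun l hl hwl => ?_
  · refine Finset.sum_pos' hweight ?_
    rcases hatA_pos_or_hatA_succ_pos hab hn hx with hpos | hpos
    · exact ⟨k, Finset.mem_range.2 (by omega), mul_pos hpos (dy_pos hab hmono hn (by omega))⟩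
    · exact ⟨k + 1, Finset.mem_range.2 (by omega), mul_pos hpos (dy_pos hab hmono hn hk)⟩
  · have hpos : 0 < hatA a b n l x :=
      (hatA_nonneg a b n l x).lt_of_ne (Ne.symm (left_ne_zero_of_mul hwl))
    rcases eq_or_eq_succ_of_hatA_pos hab hn hx hpos with rfl | rfl
    · exact ⟨le_rfl, hkk⟩
    · exact ⟨hkk, le_rfl⟩

end Interp

theorem stmt_11_general (a b : ℝ) (hab : a < b) (f : ℝ → ℝ)
    (hmono : StrictMonoOn f (Set.Icc a b))
    (n : ℕ) :
    ∀ i : ℕ, 1 ≤ i → i ≤ n →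
      ∀ x ∈ Set.Icc (nodes a b n (i - 1)) (nodes a b n i),
        (sInf (f '' Set.Icc (nodes a b n (i - 1)) (nodes a b n i)) ≤ interp a b f n x ∧
          interp a b f n x ≤ sSup (f '' Set.Icc (nodes a b n (i - 1)) (nodes a b n i))) ∧
        |f x - interp a b f n x| ≤
          sSup (f '' Set.Icc (nodes a b n (i - 1)) (nodes a b n i)) -
            sInf (f '' Set.Icc (nodes a b n (i - 1)) (nodes a b n i)) := by
  rintro i hi hin x hx
  obtain ⟨k, rfl⟩ := Nat.exists_eq_add_of_le' hi
  rw [Nat.add_sub_cancel] at hx ⊢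
  have hsub : Icc (nodes a b n k) (nodes a b n (k + 1)) ⊆ Icc a b :=
    Icc_subset_Icc (nodes_mem_Icc hab.le (by omega)).1 (nodes_mem_Icc hab.le hin).2
  have hle : nodes a b n k ≤ nodes a b n (k + 1) := hx.1.trans hx.2
  have hmono' : MonotoneOn f (Icc (nodes a b n k) (nodes a b n (k + 1))) :=
    hmono.monotoneOn.mono hsub
  have hfx : f x ∈ Icc (f (nodes a b n k)) (f (nodes a b n (k + 1))) :=
    hmono'.image_Icc_subset (mem_image_of_mem f hx)
  obtain ⟨hlow, hhigh⟩ := interp_mem_Icc hab hmono hin hx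
  rw [hmono'.sInf_image_Icc hle, hmono'.sSup_image_Icc hle]
  exact ⟨⟨hlow, hhigh⟩, abs_sub_le_of_le_of_le hfx.1 hfx.2 hlow hhigh⟩

/-- For continuous strictly increasing `f` on `[a, b]`, `n ≥ 1`, and
`1 ≤ i ≤ n`, on each subinterval `[x_{i−1}^{(n)}, x_i^{(n)}]` the interpolation function is
squeezed between the minimum and maximum of `f` there, and consequently
`|f(x) − f_n(x)|` is bounded by the oscillation of `f` on that subinterval. -/
theorem stmt_11 (a b : ℝ) (hab : a < b) (f : ℝ → ℝ)
    (hf : ContinuousOn f (Set.Icc a b)) (hmono : StrictMonoOn f (Set.Icc a b))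
    (n : ℕ) (hn : 1 ≤ n) :
    ∀ i : ℕ, 1 ≤ i → i ≤ n →
      ∀ x ∈ Set.Icc (nodes a b n (i - 1)) (nodes a b n i),
        (sInf (f '' Set.Icc (nodes a b n (i - 1)) (nodes a b n i)) ≤ interp a b f n x ∧
          interp a b f n x ≤ sSup (f '' Set.Icc (nodes a b n (i - 1)) (nodes a b n i))) ∧
        |f x - interp a b f n x| ≤
          sSup (f '' Set.Icc (nodes a b n (i - 1)) (nodes a b n i)) -
            sInf (f '' Set.Icc (nodes a b n (i - 1)) (nodes a b n i)) :=
  stmt_11_general a b hab f hmono n
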